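/- Assume every travel-time function d_a is continuous and strictly increasing on [0, ∞) and the charging unit price function λ_e : [0, ∞) → ℝ is continuous and strictly increasing. Then the Wardrop Equilibrium is unique at the aggregate level: any two Wardrop Equilibria f and f′ induce the same total arc flows (x_a(f) = x_a(f′) for every arc a) and the same aggregate EV charging need (L_e(f) = L_e(f′)); in particular all equilibria share the same travel times and the same charging unit price. -/
import Mathlib


open Finset MeasureTheory

/-- The data of the multiclass (EV/GV) routing game with coupled charging.
Vehicle classes are indexed by `Bool`: `true` is the electric class (e) and
`false` is the gasoline class (g). Paths are gathered in the type `R`, the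
origin–destination pair of a path `r` being `od r` (so `R_k = od ⁻¹' {k}`). -/
structure RoutingGame where
  /-- arcs -/
  A : Type
  finA : Fintype A
  /-- paths -/
  R : Type
  finR : Fintype R
  /-- origin–destination pairs -/
  K : Type
  /-- the O-D pair of each path -/
  od : R → K
  /-- each O-D pair has at least one path -/
  od_surj : Function.Surjective od
  /-- arc lengths -/
  len : A → ℝ
  len_pos : ∀ a, 0 < len a
  /-- travel demands -/
  D : K → ℝ
  D_nonneg : ∀ k, 0 ≤ D k
  /-- arc–path incidence `δ_{a,r} ∈ {0,1}` -/
  δ : A → R → ℝ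
  δ_mem : ∀ a r, δ a r = 0 ∨ δ a r = 1
  /-- class shares `X_e, X_g` -/
  X : Bool → ℝ
  X_nonneg : ∀ s, 0 ≤ X s
  /-- energy consumptions per distance unit `m_e, m_g` -/
  m : Bool → ℝ
  m_pos : ∀ s, 0 < m s
  /-- travel-time (congestion) functions `d_a` -/
  d : A → ℝ → ℝ
  /-- tolls `t_{a,s}` -/
  toll : A → Bool → ℝ
  toll_nonneg : ∀ a s, 0 ≤ toll a s
  /-- value of time `τ` -/
  τ : ℝ
  τ_pos : 0 < τ
  /-- (constant) gasoline unit price `λ_g` -/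
  lamg : ℝ
  lamg_nonneg : 0 ≤ lamg
  /-- charging unit price function `λ_e` -/
  lame : ℝ → ℝ

attribute [instance] RoutingGame.finA RoutingGame.finR

namespace RoutingGame

variable (G : RoutingGame)

/-- Arc flow of class `s`: `x_{a,s} = ∑_r δ_{a,r} f_{r,s}`. -/
noncomputable def arcFlow (f : G.R → Bool → ℝ) (a : G.A) (s : Bool) : ℝ :=
  ∑ r, G.δ a r * f r s

/-- Total arc flow `x_a = x_{a,e} + x_{a,g}`. -/
noncomputable def totFlow (f : G.R → Bool → ℝ) (a : G.A) : ℝ :=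
  G.arcFlow f a true + G.arcFlow f a false

open scoped Classical in
/-- Feasible path flows: nonnegative and meeting the demand `X_s D_k` of each
O-D pair `k` for each class `s`. -/
def Feasible (f : G.R → Bool → ℝ) : Prop :=
  (∀ r s, 0 ≤ f r s) ∧
  ∀ (k : G.K) (s : Bool), (∑ r, if G.od r = k then f r s else 0) = G.X s * G.D k

/-- Aggregate energy need of class `s`: `L_s = m_s ∑_a x_{a,s} l_a`. -/
noncomputable def Lneed (f : G.R → Bool → ℝ) (s : Bool) : ℝ :=
  G.m s * ∑ a, G.arcFlow f a s * G.len a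

/-- Unit energy price of class `s` at flow `f`: `λ_e(L_e(f))` for EV, `λ_g` for GV. -/
noncomputable def price (f : G.R → Bool → ℝ) (s : Bool) : ℝ :=
  if s then G.lame (G.Lneed f true) else G.lamg

/-- Cost of path `r` for class `s` at flow `f`:
`c_{r,s}(f) = ∑_a δ_{a,r} (τ d_a(x_a) + t_{a,s} + l_a m_s λ_s)`. -/
noncomputable def cost (f : G.R → Bool → ℝ) (r : G.R) (s : Bool) : ℝ :=
  ∑ a, G.δ a r * (G.τ * G.d a (G.totFlow f a) + G.toll a s + G.len a * G.m s * G.price f s)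

/-- Wardrop Equilibrium: feasible, and for each class any used path is not more
costly than any other path with the same O-D pair. -/
def IsWE (f : G.R → Bool → ℝ) : Prop :=
  G.Feasible f ∧ ∀ (s : Bool) (r r' : G.R), G.od r = G.od r' → 0 < f r s →
    G.cost f r s ≤ G.cost f r' s

/-- The Beckmann function
`B(f) = τ ∑_a ∫_0^{x_a} d_a + ∑_{a,s} t_{a,s} x_{a,s} + ∫_0^{L_e(f)} λ_e + λ_g L_g(f)`. -/
noncomputable def Beckmann (f : G.R → Bool → ℝ) : ℝ :=
  G.τ * ∑ a, (∫ u in (0 : ℝ)..G.totFlow f a, G.d a u)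
    + ∑ a, ∑ s : Bool, G.toll a s * G.arcFlow f a s
    + (∫ u in (0 : ℝ)..G.Lneed f true, G.lame u)
    + G.lamg * G.Lneed f false

end RoutingGame

section Aux

lemma strictMonoOn_prod_nonneg {g : ℝ → ℝ} (hg : StrictMonoOn g (Set.Ici 0))
    {x y : ℝ} (hx : 0 ≤ x) (hy : 0 ≤ y) : 0 ≤ (g x - g y) * (x - y) := by
  rcases lt_trichotomy x y with h | h | h
  · nlinarith [hg (Set.mem_Ici.mpr hx) (Set.mem_Ici.mpr hy) h]
  · simp [h]
  · nlinarith [hg (Set.mem_Ici.mpr hy) (Set.mem_Ici.mpr hx) h]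

lemma strictMonoOn_eq_of_prod_eq_zero {g : ℝ → ℝ} (hg : StrictMonoOn g (Set.Ici 0))
    {x y : ℝ} (hx : 0 ≤ x) (hy : 0 ≤ y) (h : (g x - g y) * (x - y) = 0) : x = y := by
  rcases lt_trichotomy x y with h' | h' | h'
  · exfalso; nlinarith [hg (Set.mem_Ici.mpr hx) (Set.mem_Ici.mpr hy) h']
  · exact h'
  · exfalso; nlinarith [hg (Set.mem_Ici.mpr hy) (Set.mem_Ici.mpr hx) h']

namespace RoutingGame

variable (G : RoutingGame)

lemma δ_nonneg (a : G.A) (r : G.R) : 0 ≤ G.δ a r := by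
  rcases G.δ_mem a r with h | h <;> simp [h]

lemma arcFlow_nonneg (f : G.R → Bool → ℝ) (hf : ∀ r s, 0 ≤ f r s) (a : G.A) (s : Bool) :
    0 ≤ G.arcFlow f a s :=
  Finset.sum_nonneg fun r _ => mul_nonneg (G.δ_nonneg a r) (hf r s)

lemma Lneed_nonneg (f : G.R → Bool → ℝ) (hf : ∀ r s, 0 ≤ f r s) (s : Bool) :
    0 ≤ G.Lneed f s :=
  mul_nonneg (G.m_pos s).le <| Finset.sum_nonneg fun a _ =>
    mul_nonneg (G.arcFlow_nonneg f hf a s) (G.len_pos a).le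

/-- The variational inequality satisfied by a Wardrop equilibrium, per class. -/
lemma VI (f g : G.R → Bool → ℝ) (hf : G.IsWE f) (hg : G.Feasible g) (s : Bool) :
    ∑ r, G.cost f r s * f r s ≤ ∑ r, G.cost f r s * g r s := by
  classical
  obtain ⟨⟨hfpos, hfdem⟩, hwe⟩ := hf
  obtain ⟨hgpos, hgdem⟩ := hg
  have hne : ∀ k : G.K, (Finset.univ.filter (fun r => G.od r = k)).Nonempty := by
    intro k; obtain ⟨r, hr⟩ := G.od_surj k; exact ⟨r, by simp [hr]⟩
  set μ : G.K → ℝ :=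
    fun k => (Finset.univ.filter (fun r => G.od r = k)).inf' (hne k) (fun r => G.cost f r s)
    with hμdef
  have hμ_le : ∀ r, μ (G.od r) ≤ G.cost f r s := fun r =>
    Finset.inf'_le _ (by simp)
  have heq : ∀ r, 0 < f r s → G.cost f r s = μ (G.od r) := by
    intro r hr
    refine le_antisymm ?_ (hμ_le r)
    refine Finset.le_inf' _ _ fun r' hr' => ?_
    exact hwe s r r' ((Finset.mem_filter.mp hr').2).symm hr
  have h1 : ∑ r, G.cost f r s * f r s = ∑ r, μ (G.od r) * f r s := by
    refine Finset.sum_congr rfl fun r _ => ?_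
    rcases eq_or_lt_of_le (hfpos r s) with h | h
    · simp [← h]
    · rw [heq r h]
  have key : ∀ h : G.R → Bool → ℝ,
      (∀ k, (∑ r, if G.od r = k then h r s else 0) = G.X s * G.D k) →
      ∑ r, μ (G.od r) * h r s = ∑ k ∈ Finset.univ.image G.od, μ k * (G.X s * G.D k) := by
    intro h hdem
    rw [← Finset.sum_fiberwise_of_maps_to
      (fun r _ => Finset.mem_image_of_mem G.od (Finset.mem_univ r))
      (fun r => μ (G.od r) * h r s)]
    refine Finset.sum_congr rfl fun k _ => ?_
    rw [← hdem k, ← Finset.sum_filter, Finset.mul_sum]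
    refine Finset.sum_congr rfl fun r hr => ?_
    rw [(Finset.mem_filter.mp hr).2]
  have h3 : ∑ r, μ (G.od r) * f r s = ∑ r, μ (G.od r) * g r s := by
    rw [key f (fun k => hfdem k s), key g (fun k => hgdem k s)]
  calc ∑ r, G.cost f r s * f r s = ∑ r, μ (G.od r) * g r s := by rw [h1, h3]
    _ ≤ ∑ r, G.cost f r s * g r s :=
        Finset.sum_le_sum fun r _ => mul_le_mul_of_nonneg_right (hμ_le r) (hgpos r s)

/-- Algebraic identity: the pairing of cost differences with flow differences
decomposes over arcs. -/
lemma cost_diff_pairing (f f' : G.R → Bool → ℝ) (s : Bool) :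
    ∑ r, (G.cost f r s - G.cost f' r s) * (f r s - f' r s)
      = ∑ a, (G.τ * (G.d a (G.totFlow f a) - G.d a (G.totFlow f' a))
          + G.len a * G.m s * (G.price f s - G.price f' s))
          * (G.arcFlow f a s - G.arcFlow f' a s) := by
  have hdiff : ∀ r, G.cost f r s - G.cost f' r s
      = ∑ a, G.δ a r * (G.τ * (G.d a (G.totFlow f a) - G.d a (G.totFlow f' a))
          + G.len a * G.m s * (G.price f s - G.price f' s)) := by
    intro r
    rw [cost, cost, ← Finset.sum_sub_distrib]
    exact Finset.sum_congr rfl fun a _ => by ring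
  calc ∑ r, (G.cost f r s - G.cost f' r s) * (f r s - f' r s)
      = ∑ r, ∑ a, G.δ a r * (G.τ * (G.d a (G.totFlow f a) - G.d a (G.totFlow f' a))
          + G.len a * G.m s * (G.price f s - G.price f' s)) * (f r s - f' r s) := by
        refine Finset.sum_congr rfl fun r _ => ?_
        rw [hdiff r, Finset.sum_mul]
    _ = ∑ a, (G.τ * (G.d a (G.totFlow f a) - G.d a (G.totFlow f' a))
          + G.len a * G.m s * (G.price f s - G.price f' s))
          * (G.arcFlow f a s - G.arcFlow f' a s) := by
        rw [Finset.sum_comm]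
        refine Finset.sum_congr rfl fun a _ => ?_
        rw [arcFlow, arcFlow, ← Finset.sum_sub_distrib, Finset.mul_sum]
        exact Finset.sum_congr rfl fun r _ => by ring

end RoutingGame

end Aux

/-- Prop. 4, uniqueness: if the travel-time functions and the
charging unit price are continuous and strictly increasing, the Wardrop Equilibrium is
unique at the aggregate level: any two WE induce the same total arc flows and the same
aggregate EV charging need; in particular they share the same travel times and the same
charging unit price. -/
theorem WE_unique_aggregate (G : RoutingGame)
    (hd_cont : ∀ a, ContinuousOn (G.d a) (Set.Ici 0))
    (hd_mono : ∀ a, StrictMonoOn (G.d a) (Set.Ici 0))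
    (hlame_cont : ContinuousOn G.lame (Set.Ici 0))
    (hlame_mono : StrictMonoOn G.lame (Set.Ici 0))
    (f f' : G.R → Bool → ℝ) (hf : G.IsWE f) (hf' : G.IsWE f') :
    (∀ a, G.totFlow f a = G.totFlow f' a) ∧
    G.Lneed f true = G.Lneed f' true ∧
    (∀ a, G.d a (G.totFlow f a) = G.d a (G.totFlow f' a)) ∧
    G.lame (G.Lneed f true) = G.lame (G.Lneed f' true) := by
  classical
  have hT : ∀ s, ∑ r, (G.cost f r s - G.cost f' r s) * (f r s - f' r s) ≤ 0 := by
    intro s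
    have h1 := G.VI f f' hf hf'.1 s
    have h2 := G.VI f' f hf' hf.1 s
    have e : ∑ r, (G.cost f r s - G.cost f' r s) * (f r s - f' r s)
        = (∑ r, G.cost f r s * f r s - ∑ r, G.cost f r s * f' r s)
        + (∑ r, G.cost f' r s * f' r s - ∑ r, G.cost f' r s * f r s) := by
      rw [← Finset.sum_sub_distrib, ← Finset.sum_sub_distrib, ← Finset.sum_add_distrib]
      exact Finset.sum_congr rfl fun r _ => by ring
    rw [e]; linarith
  have hTt := hT true
  have hTf := hT false
  rw [G.cost_diff_pairing f f' true] at hTt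
  rw [G.cost_diff_pairing f f' false] at hTf
  have hprice_f : G.price f false - G.price f' false = 0 := by simp [RoutingGame.price]
  have hprice_t : G.price f true - G.price f' true
      = G.lame (G.Lneed f true) - G.lame (G.Lneed f' true) := by simp [RoutingGame.price]
  rw [hprice_f] at hTf
  rw [hprice_t] at hTt
  set Δp := G.lame (G.Lneed f true) - G.lame (G.Lneed f' true) with hΔp
  -- the combined inequality
  have hL : G.Lneed f true - G.Lneed f' true
      = ∑ a, G.m true * ((G.arcFlow f a true - G.arcFlow f' a true) * G.len a) := by
    rw [RoutingGame.Lneed, RoutingGame.Lneed, Finset.mul_sum, Finset.mul_sum,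
      ← Finset.sum_sub_distrib]
    exact Finset.sum_congr rfl fun a _ => by ring
  have hS : (∑ a, G.τ * (G.d a (G.totFlow f a) - G.d a (G.totFlow f' a))
        * (G.totFlow f a - G.totFlow f' a))
      + Δp * (G.Lneed f true - G.Lneed f' true) ≤ 0 := by
    have e : (∑ a, G.τ * (G.d a (G.totFlow f a) - G.d a (G.totFlow f' a))
          * (G.totFlow f a - G.totFlow f' a))
        + Δp * (G.Lneed f true - G.Lneed f' true)
        = (∑ a, (G.τ * (G.d a (G.totFlow f a) - G.d a (G.totFlow f' a))
            + G.len a * G.m true * Δp) * (G.arcFlow f a true - G.arcFlow f' a true))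
        + ∑ a, (G.τ * (G.d a (G.totFlow f a) - G.d a (G.totFlow f' a))
            + G.len a * G.m false * 0) * (G.arcFlow f a false - G.arcFlow f' a false) := by
      rw [hL, Finset.mul_sum, ← Finset.sum_add_distrib, ← Finset.sum_add_distrib]
      refine Finset.sum_congr rfl fun a _ => ?_
      simp only [RoutingGame.totFlow]
      ring
    rw [e]; linarith
  -- nonnegativity of each piece
  have hx_nonneg : ∀ (g : G.R → Bool → ℝ), G.Feasible g → ∀ a, 0 ≤ G.totFlow g a := by
    intro g hg a
    exact add_nonneg (G.arcFlow_nonneg g hg.1 a true) (G.arcFlow_nonneg g hg.1 a false)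
  have hterm_nonneg : ∀ a, 0 ≤ G.τ * (G.d a (G.totFlow f a) - G.d a (G.totFlow f' a))
      * (G.totFlow f a - G.totFlow f' a) := by
    intro a
    have h := strictMonoOn_prod_nonneg (hd_mono a) (hx_nonneg f hf.1 a) (hx_nonneg f' hf'.1 a)
    rw [mul_assoc]
    exact mul_nonneg G.τ_pos.le h
  have hLpair_nonneg : 0 ≤ Δp * (G.Lneed f true - G.Lneed f' true) := by
    rw [hΔp]
    exact strictMonoOn_prod_nonneg hlame_mono (G.Lneed_nonneg f hf.1.1 true)
      (G.Lneed_nonneg f' hf'.1.1 true)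
  have hsum_nonneg : 0 ≤ ∑ a, G.τ * (G.d a (G.totFlow f a) - G.d a (G.totFlow f' a))
      * (G.totFlow f a - G.totFlow f' a) :=
    Finset.sum_nonneg fun a _ => hterm_nonneg a
  have hsum_zero : ∑ a, G.τ * (G.d a (G.totFlow f a) - G.d a (G.totFlow f' a))
      * (G.totFlow f a - G.totFlow f' a) = 0 := le_antisymm (by linarith) hsum_nonneg
  have hLpair_zero : Δp * (G.Lneed f true - G.Lneed f' true) = 0 := by linarith
  have htot : ∀ a, G.totFlow f a = G.totFlow f' a := by
    intro a
    have hz : G.τ * (G.d a (G.totFlow f a) - G.d a (G.totFlow f' a))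
        * (G.totFlow f a - G.totFlow f' a) = 0 :=
      (Finset.sum_eq_zero_iff_of_nonneg (fun a _ => hterm_nonneg a)).mp hsum_zero a
        (Finset.mem_univ a)
    have hz' : (G.d a (G.totFlow f a) - G.d a (G.totFlow f' a))
        * (G.totFlow f a - G.totFlow f' a) = 0 := by
      rcases mul_eq_zero.mp hz with h | h
      · rcases mul_eq_zero.mp h with h' | h'
        · exact absurd h' (ne_of_gt G.τ_pos)
        · rw [h', zero_mul]
      · rw [h, mul_zero]
    exact strictMonoOn_eq_of_prod_eq_zero (hd_mono a) (hx_nonneg f hf.1 a) (hx_nonneg f' hf'.1 a) hz'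
  have hLeq : G.Lneed f true = G.Lneed f' true :=
    strictMonoOn_eq_of_prod_eq_zero hlame_mono (G.Lneed_nonneg f hf.1.1 true)
      (G.Lneed_nonneg f' hf'.1.1 true) hLpair_zero
  exact ⟨htot, hLeq, fun a => by rw [htot a], by rw [hLeq]⟩
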